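/- Let n ≥ 2 and let w be a word of length n such that w_i = w_{n-i+1} for all i (w is a palindrome). Let k be the maximum number of times any single letter appears in w. Then f(w) = max{n, 2k} + 2. -/

import Mathlib

/-!
For a palindrome, a line contains `w` only if it reads `w` forwards. If row `i₀` and column `j₀`
both read `w`, then every row `i` reading `w` has `w i = G i j₀ = w j₀`, and likewise every column
reading `w` is indexed by a position carrying the letter `w i₀`; so either the rows or the columns
are all missing, or both are at most `k` in number. Hence rows and columns contribute at most
`max n (2k)`. The bound is attained by the grid all of whose rows are `w`, and, when `2k > n`, by
copying `w` into the rows and columns indexed by the `k` positions of a most frequent letter;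
both grids carry `w` on the two diagonals as well.
-/

namespace WordGrid

variable {α : Type*}

/-- The `i`-th row of the grid `G` contains the word `w` (forwards or backwards). -/
def rowC {n : ℕ} (w : Fin n → α) (G : Fin n → Fin n → α) (i : Fin n) : Prop :=
  (∀ j, G i j = w j) ∨ (∀ j, G i j = w j.rev)

/-- The `i`-th column of the grid `G` contains the word `w` (forwards or backwards). -/
def colC {n : ℕ} (w : Fin n → α) (G : Fin n → Fin n → α) (i : Fin n) : Prop :=
  (∀ j, G j i = w j) ∨ (∀ j, G j i = w j.rev)

/-- The main diagonal of the grid `G` contains the word `w`. -/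
def diagC {n : ℕ} (w : Fin n → α) (G : Fin n → Fin n → α) : Prop :=
  (∀ j, G j j = w j) ∨ (∀ j, G j j = w j.rev)

/-- The anti-diagonal of the grid `G` contains the word `w`. -/
def adiagC {n : ℕ} (w : Fin n → α) (G : Fin n → Fin n → α) : Prop :=
  (∀ j, G j j.rev = w j) ∨ (∀ j, G j j.rev = w j.rev)

open Classical in
/-- `f(w,G)`: the number of rows, columns and diagonals of `G` containing `w`. -/
noncomputable def count {n : ℕ} (w : Fin n → α) (G : Fin n → Fin n → α) : ℕ :=
  {i | rowC w G i}.ncard + {i | colC w G i}.ncard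
    + (if diagC w G then 1 else 0) + (if adiagC w G then 1 else 0)

/-- `f(w)`: the maximum of `f(w,G)` over all `n`-grids `G`. -/
noncomputable def fword {n : ℕ} (w : Fin n → α) : ℕ :=
  sSup {m | ∃ G : Fin n → Fin n → α, count w G = m}

section Palindrome

variable {n : ℕ} {w : Fin n → α} {G : Fin n → Fin n → α}

theorem rowC_iff_of_palindrome (hpal : ∀ i, w i = w i.rev) {i : Fin n} :
    rowC w G i ↔ ∀ j, G i j = w j := by
  refine ⟨?_, Or.inl⟩
  rintro (h | h) j
  · exact h j
  · rw [h j, ← hpal]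

theorem colC_iff_of_palindrome (hpal : ∀ i, w i = w i.rev) {i : Fin n} :
    colC w G i ↔ ∀ j, G j i = w j := by
  refine ⟨?_, Or.inl⟩
  rintro (h | h) j
  · exact h j
  · rw [h j, ← hpal]

theorem setOf_rowC_subset_of_colC (hpal : ∀ i, w i = w i.rev) {j₀ : Fin n}
    (hcol : colC w G j₀) : {i | rowC w G i} ⊆ {i | w i = w j₀} := by
  intro i hrow
  rw [Set.mem_ofPred_eq, rowC_iff_of_palindrome hpal] at hrow
  rw [colC_iff_of_palindrome hpal] at hcol
  rw [Set.mem_ofPred_eq, ← hcol i, hrow j₀]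

theorem setOf_colC_subset_of_rowC (hpal : ∀ i, w i = w i.rev) {i₀ : Fin n}
    (hrow : rowC w G i₀) : {j | colC w G j} ⊆ {j | w j = w i₀} := by
  intro j hcol
  rw [Set.mem_ofPred_eq, colC_iff_of_palindrome hpal] at hcol
  rw [rowC_iff_of_palindrome hpal] at hrow
  rw [Set.mem_ofPred_eq, ← hrow j, hcol i₀]

theorem ncard_rowC_add_ncard_colC_le (hpal : ∀ i, w i = w i.rev) {k : ℕ}
    (hk : ∀ a, {i | w i = a}.ncard ≤ k) (G : Fin n → Fin n → α) :
    {i | rowC w G i}.ncard + {i | colC w G i}.ncard ≤ max n (2 * k) := by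
  have hle_n (s : Set (Fin n)) : s.ncard ≤ n := by
    simpa using Set.ncard_le_card s
  rcases Set.eq_empty_or_nonempty {i | rowC w G i} with hR | ⟨i₀, hi₀⟩
  · rw [hR, Set.ncard_empty, zero_add]
    exact (hle_n _).trans (le_max_left _ _)
  rcases Set.eq_empty_or_nonempty {j | colC w G j} with hC | ⟨j₀, hj₀⟩
  · rw [hC, Set.ncard_empty, add_zero]
    exact (hle_n _).trans (le_max_left _ _)
  have hR := (Set.ncard_le_ncard (setOf_rowC_subset_of_colC hpal hj₀)).trans (hk _)
  have hC := (Set.ncard_le_ncard (setOf_colC_subset_of_rowC hpal hi₀)).trans (hk _)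
  omega

theorem count_le (hpal : ∀ i, w i = w i.rev) {k : ℕ} (hk : ∀ a, {i | w i = a}.ncard ≤ k)
    (G : Fin n → Fin n → α) : count w G ≤ max n (2 * k) + 2 := by
  have := ncard_rowC_add_ncard_colC_le hpal hk G
  unfold count
  split_ifs <;> omega

end Palindrome

theorem le_count_const_rows {n : ℕ} (w : Fin n → α) : n + 2 ≤ count w (fun _ => w) := by
  have hrows : {i | rowC w (fun _ => w) i} = Set.univ :=
    Set.eq_univ_of_forall fun _ => Or.inl fun _ => rfl
  have hdiag : diagC w (fun _ => w) := Or.inl fun _ => rfl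
  have hadiag : adiagC w (fun _ => w) := Or.inr fun _ => rfl
  unfold count
  rw [hrows, Set.ncard_univ, Nat.card_eq_fintype_card, Fintype.card_fin, if_pos hdiag,
    if_pos hadiag]
  omega

open Classical in
/-- The rows and columns indexed by the positions of the letter `a` all read `w`. -/
noncomputable def letterGrid {n : ℕ} (w : Fin n → α) (a : α) : Fin n → Fin n → α :=
  fun i j => if w j = a then w i else w j

theorem le_count_letterGrid {n : ℕ} {w : Fin n → α} (hpal : ∀ i, w i = w i.rev) (a : α) :
    2 * {i | w i = a}.ncard + 2 ≤ count w (letterGrid w a) := by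
  classical
  have hrows : {i | w i = a} ⊆ {i | rowC w (letterGrid w a) i} := by
    intro i hi
    refine Or.inl fun j => ?_
    by_cases hj : w j = a <;> simp [letterGrid, hj, hi.out]
  have hcols : {i | w i = a} ⊆ {i | colC w (letterGrid w a) i} :=
    fun j hj => Or.inl fun i => if_pos hj.out
  have hdiag : diagC w (letterGrid w a) := by
    refine Or.inl fun j => ?_
    by_cases hj : w j = a <;> simp [letterGrid, hj]
  have hadiag : adiagC w (letterGrid w a) := by
    refine Or.inl fun j => ?_
    by_cases hj : w j.rev = a <;> simp [letterGrid, hj, ← hpal j]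
  have hR := Set.ncard_le_ncard hrows
  have hC := Set.ncard_le_ncard hcols
  unfold count
  rw [if_pos hdiag, if_pos hadiag]
  omega

theorem palindrome_fword_general {n : ℕ} (w : Fin n → α)
    (hpal : ∀ i, w i = w i.rev) (k : ℕ)
    (hk : IsGreatest {m | ∃ a : α, {i | w i = a}.ncard = m} k) :
    fword w = max n (2 * k) + 2 := by
  obtain ⟨a, ha⟩ := hk.1
  have hbound : ∀ b, {i | w i = b}.ncard ≤ k := fun b => hk.2 ⟨b, rfl⟩
  refine IsGreatest.csSup_eq ⟨?_, ?_⟩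
  · rcases le_total (2 * k) n with h | h
    · refine ⟨fun _ => w, le_antisymm (count_le hpal hbound _) ?_⟩
      simpa [max_eq_left h] using le_count_const_rows w
    · refine ⟨letterGrid w a, le_antisymm (count_le hpal hbound _) ?_⟩
      simpa [max_eq_right h, ha] using le_count_letterGrid hpal a
  · rintro _ ⟨G, rfl⟩
    exact count_le hpal hbound G

theorem palindrome_fword {n : ℕ} (hn : 2 ≤ n) (w : Fin n → α)
    (hpal : ∀ i, w i = w i.rev) (k : ℕ)
    (hk : IsGreatest {m | ∃ a : α, {i | w i = a}.ncard = m} k) :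
    fword w = max n (2 * k) + 2 :=
  palindrome_fword_general w hpal k hk

end WordGrid
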